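/- arXiv:2507.08389 — 5 statements merged into one kernel-verified Lean document; each statement's English description precedes it below -/
import Mathlib

section
/- Under the hypotheses of the Taylor-coefficient comparison for f'² + g'² − (1+f+g)(f''+g'') = ψ(1+f+g), the following identity holds: (Γ₂ − 2Γ₁)·a₁·b₁ = 0, where a₁=f'(0), b₁=g'(0), Γ_k=ψ^{(k)}(1). -/
/-!
Write `R(x, y) = f'(x)² + g'(y)² − (1 + f(x) + g(y))(f''(x) + g''(y)) − ψ(1 + f(x) + g(y))`,
which vanishes near the origin, hence so do `∂ₓR`, `∂ᵧR` and `∂ᵧ∂ₓR`. At the origin `∂ₓR = 0`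
and `∂ᵧR = 0` give `a₁(f'' − g'') − f''' = Γ₁a₁` and `b₁(g'' − f'') − g''' = Γ₁b₁`; multiplying
by `b₁` and `a₁` and adding, `−b₁f''' − a₁g''' = 2Γ₁a₁b₁`, while `∂ᵧ∂ₓR = 0` says that the same
left-hand side equals `Γ₂a₁b₁`. Since `R` is symmetric under `(f, x) ↔ (g, y)`, `∂ᵧR` is `∂ₓR`
with the roles exchanged.
-/

open Filter Topology

section PartialDerivatives

variable {𝕜 E Y : Type*} [NontriviallyNormedField 𝕜] [NormedAddCommGroup E] [NormedSpace 𝕜 E]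
  [TopologicalSpace Y]

theorem HasDerivAt.eq_zero_of_eventuallyEq_zero {φ : 𝕜 → E} {φ' : E} {a : 𝕜}
    (hφ : HasDerivAt φ φ' a) (h : φ =ᶠ[𝓝 a] 0) : φ' = 0 :=
  hφ.unique ((hasDerivAt_const a 0).congr_of_eventuallyEq h)

theorem Filter.Eventually.partialDeriv_fst_eq_zero {F F' : 𝕜 → Y → E} {a : 𝕜} {b : Y}
    (hF : ∀ᶠ p : 𝕜 × Y in 𝓝 (a, b), F p.1 p.2 = 0)
    (hF' : ∀ᶠ p : 𝕜 × Y in 𝓝 (a, b), HasDerivAt (F · p.2) (F' p.1 p.2) p.1) :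
    ∀ᶠ p : 𝕜 × Y in 𝓝 (a, b), F' p.1 p.2 = 0 := by
  filter_upwards [hF.eventually_nhds, hF'] with ⟨x, y⟩ hzero hderiv
  exact hderiv.eq_zero_of_eventuallyEq_zero
    (((Continuous.prodMk_left y).tendsto x).eventually hzero)

end PartialDerivatives

noncomputable section Residual

variable (f g ψ : ℝ → ℝ)

def pdeResidual (x y : ℝ) : ℝ :=
  deriv f x ^ 2 + deriv g y ^ 2 - (1 + f x + g y) * (deriv (deriv f) x + deriv (deriv g) y)
    - ψ (1 + f x + g y)

def pdeResidualDerivFst (x y : ℝ) : ℝ :=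
  2 * deriv f x * deriv (deriv f) x - deriv f x * (deriv (deriv f) x + deriv (deriv g) y)
    - (1 + f x + g y) * deriv (deriv (deriv f)) x - deriv ψ (1 + f x + g y) * deriv f x

theorem pdeResidual_comm (x y : ℝ) : pdeResidual g f ψ y x = pdeResidual f g ψ x y := by
  simp only [pdeResidual, add_right_comm 1 (g y) (f x)]
  ring

variable {f g ψ}

theorem hasDerivAt_pdeResidual_fst {x y : ℝ} (hf : AnalyticAt ℝ f x)
    (hψ : AnalyticAt ℝ ψ (1 + f x + g y)) :
    HasDerivAt (pdeResidual f g ψ · y) (pdeResidualDerivFst f g ψ x y) x := by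
  have hf₀ := hf.differentiableAt.hasDerivAt
  have hf₁ := hf.deriv.differentiableAt.hasDerivAt
  have hf₂ := hf.deriv.deriv.differentiableAt.hasDerivAt
  have hinner := (hf₀.const_add 1).add_const (g y)
  have hψ₀ := hψ.differentiableAt.hasDerivAt.comp x hinner
  have H := (((hf₁.pow 2).add_const (deriv g y ^ 2)).sub
    (hinner.mul (hf₂.add_const (deriv (deriv g) y)))).sub hψ₀
  exact H.congr_deriv (by simp only [pdeResidualDerivFst, Nat.cast_ofNat]; ring)

theorem hasDerivAt_pdeResidualDerivFst_snd {x y : ℝ} (hg : AnalyticAt ℝ g y)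
    (hψ : AnalyticAt ℝ ψ (1 + f x + g y)) :
    HasDerivAt (pdeResidualDerivFst f g ψ x ·)
      (-(deriv f x * deriv (deriv (deriv g)) y) - deriv g y * deriv (deriv (deriv f)) x
        - deriv (deriv ψ) (1 + f x + g y) * deriv g y * deriv f x) y := by
  have hg₀ := hg.differentiableAt.hasDerivAt
  have hg₂ := hg.deriv.deriv.differentiableAt.hasDerivAt
  have hinner := hg₀.const_add (1 + f x)
  have hψ₁ := hψ.deriv.differentiableAt.hasDerivAt.comp y hinner
  exact ((((hg₂.const_add (deriv (deriv f) x)).const_mul (deriv f x)).const_sub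
    (2 * deriv f x * deriv (deriv f) x)).sub (hinner.mul_const (deriv (deriv (deriv f)) x))).sub
    (hψ₁.mul_const (deriv f x))

theorem eventually_pdeResidualDerivFst_eq_zero {a b : ℝ} (hf : AnalyticAt ℝ f a)
    (hg : ContinuousAt g b) (hψ : AnalyticAt ℝ ψ (1 + f a + g b))
    (hR : ∀ᶠ p : ℝ × ℝ in 𝓝 (a, b), pdeResidual f g ψ p.1 p.2 = 0) :
    ∀ᶠ p : ℝ × ℝ in 𝓝 (a, b), pdeResidualDerivFst f g ψ p.1 p.2 = 0 := by
  have hinner : ContinuousAt (fun p : ℝ × ℝ => 1 + f p.1 + g p.2) (a, b) := by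
    have := hf.continuousAt
    fun_prop
  refine hR.partialDeriv_fst_eq_zero ?_
  filter_upwards [continuousAt_fst.eventually hf.eventually_analyticAt,
    hinner.eventually hψ.eventually_analyticAt] with p hfp hψp
  exact hasDerivAt_pdeResidual_fst hfp hψp

end Residual

/-- From the Taylor-coefficient comparison for
`f'² + g'² − (1+f+g)(f''+g'') = ψ(1+f+g)` one deduces `(Γ₂ − 2Γ₁)·a₁·b₁ = 0`,
where `a₁ = f'(0)`, `b₁ = g'(0)`, `Γₖ = ψ⁽ᵏ⁾(1)`. -/
theorem gamma_identity_a1_b1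
    (f g ψ : ℝ → ℝ)
    (hf : AnalyticAt ℝ f 0) (hg : AnalyticAt ℝ g 0) (hψ : AnalyticAt ℝ ψ 1)
    (hf0 : f 0 = 0) (hg0 : g 0 = 0)
    (heq : ∀ᶠ p : ℝ × ℝ in nhds (0, 0),
      (deriv f p.1) ^ 2 + (deriv g p.2) ^ 2
        - (1 + f p.1 + g p.2) * (deriv (deriv f) p.1 + deriv (deriv g) p.2)
        = ψ (1 + f p.1 + g p.2)) :
    (iteratedDeriv 2 ψ 1 - 2 * deriv ψ 1) * deriv f 0 * deriv g 0 = 0 := by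
  have hψfg : AnalyticAt ℝ ψ (1 + f 0 + g 0) := by rwa [hf0, hg0, add_zero, add_zero]
  have hψgf : AnalyticAt ℝ ψ (1 + g 0 + f 0) := by rwa [add_right_comm]
  have hR : ∀ᶠ p : ℝ × ℝ in 𝓝 (0, 0), pdeResidual f g ψ p.1 p.2 = 0 :=
    heq.mono fun _ hp => sub_eq_zero.mpr hp
  have hR' : ∀ᶠ p : ℝ × ℝ in 𝓝 (0, 0), pdeResidual g f ψ p.1 p.2 = 0 :=
    (continuous_swap.tendsto (0, 0)).eventually hR |>.mono fun p hp =>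
      (pdeResidual_comm f g ψ p.2 p.1).trans hp
  have hderivFst := eventually_pdeResidualDerivFst_eq_zero hf hg.continuousAt hψfg hR
  have hfst : pdeResidualDerivFst f g ψ 0 0 = 0 := hderivFst.self_of_nhds
  have hsnd : pdeResidualDerivFst g f ψ 0 0 = 0 :=
    (eventually_pdeResidualDerivFst_eq_zero hg hf.continuousAt hψgf hR').self_of_nhds
  have hmixed := (hasDerivAt_pdeResidualDerivFst_snd hg hψfg).eq_zero_of_eventuallyEq_zero
    (((Continuous.prodMk_right 0).tendsto 0).eventually hderivFst)
  simp only [pdeResidualDerivFst, hf0, hg0, add_zero] at hfst hsnd hmixed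
  rw [iteratedDeriv_succ, iteratedDeriv_one]
  linear_combination deriv g 0 * hfst + deriv f 0 * hsnd - hmixed
end

section
/- Let P=P(u,v) be a positive analytic function on an open neighborhood of the origin in ℝ², with P(0,0)=1, P_{uv}=0 identically, and Δ log P = φ(P) for an analytic function φ (where Δf=−f_{uu}−f_{vv}). Set ψ(r)=r²φ(r) and assume ψ''(1) − 2ψ'(1) ≠ 0. Then P depends only on one of the two variables: P(u,v)=1+f(u) or P(u,v)=1+g(v). -/
/-!
Near a point of `s`, `P_{uv} = 0` splits `P` as `F(u) + G(v)`, and the equation becomes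
`F'² + G'² - (F + G)(F'' + G'') = ψ(F + G)`. Differentiating it in `u`, in `v` and in both
variables gives three identities whose combination kills every third derivative and leaves
`F'G' (Pψ''(P) - 2ψ'(P)) = 0`. As `Pψ''(P) - 2ψ'(P)` does not vanish at the origin and analytic
functions on a connected open set have no zero divisors, `P_u ≡ 0` or `P_v ≡ 0`. If `P_v ≡ 0`,
then `P` is locally a function of `u`; these local functions of one real variable are analytic
continuations of each other along chains of balls in `s`, so `P` is constant on each vertical
line of `s`, even one that meets `s` in several pieces.
-/

open Set Filter Metric Topology Function

section Generic

theorem AnalyticOnNhd.eqOn_zero_or_eqOn_zero_of_mul {𝕜 E : Type*} [NontriviallyNormedField 𝕜]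
    [NormedAddCommGroup E] [NormedSpace 𝕜 E] {f g : E → 𝕜} {U : Set E}
    (hf : AnalyticOnNhd 𝕜 f U) (hg : AnalyticOnNhd 𝕜 g U) (hU : IsOpen U)
    (hU' : IsPreconnected U) (hfg : ∀ z ∈ U, f z * g z = 0) :
    EqOn f 0 U ∨ EqOn g 0 U := by
  by_cases hf0 : EqOn f 0 U
  · exact Or.inl hf0
  obtain ⟨z₀, hz₀, hfz₀⟩ : ∃ z₀ ∈ U, f z₀ ≠ 0 := by simpa [EqOn] using hf0
  refine Or.inr (hg.eqOn_zero_of_preconnected_of_eventuallyEq_zero hU' hz₀ ?_)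
  filter_upwards [(hf z₀ hz₀).continuousAt.eventually_ne hfz₀, hU.mem_nhds hz₀] with z hfz hz
  exact (mul_eq_zero.1 (hfg z hz)).resolve_left hfz

theorem exists_eq_comp_of_fiberwise_eq {α β γ : Type*} [Nonempty γ] {s : Set α} {g : α → γ}
    {π : α → β} (h : ∀ p ∈ s, ∀ q ∈ s, π p = π q → g p = g q) :
    ∃ f : β → γ, ∀ p ∈ s, g p = f (π p) := by
  have hfac : FactorsThrough (fun p : s ↦ g p) (fun p : s ↦ π p) :=
    fun p q hpq ↦ h p p.2 q q.2 hpq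
  exact ⟨extend (fun p : s ↦ π p) (fun p : s ↦ g p) (fun _ ↦ Classical.arbitrary γ),
    fun p hp ↦ (hfac.extend_apply _ ⟨p, hp⟩).symm⟩

end Generic

section OneVariableContinuation

variable {E : Type*} [NormedAddCommGroup E] [NormedSpace ℝ E]

theorem exists_analyticOnNhd_union_eqOn {U V : Set ℝ} {f g : ℝ → E} (hU : IsOpen U)
    (hV : IsOpen V) (hU' : IsPreconnected U) (hV' : IsPreconnected V)
    (hf : AnalyticOnNhd ℝ f U) (hg : AnalyticOnNhd ℝ g V) {x : ℝ} (hxU : x ∈ U) (hxV : x ∈ V)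
    (hfg : f =ᶠ[𝓝 x] g) :
    ∃ h : ℝ → E, AnalyticOnNhd ℝ h (U ∪ V) ∧ EqOn h f U ∧ EqOn h g V := by
  classical
  -- the overlap of two intervals is an interval, so the identity theorem applies on all of it
  have hUV : EqOn f g (U ∩ V) :=
    (hf.mono inter_subset_left).eqOn_of_preconnected_of_eventuallyEq
      (hg.mono inter_subset_right) (hU'.ordConnected.inter hV'.ordConnected).isPreconnected
      ⟨hxU, hxV⟩ hfg
  have hhU : EqOn (U.piecewise f g) f U := fun y hy ↦ piecewise_eq_of_mem _ _ _ hy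
  have hhV : EqOn (U.piecewise f g) g V := fun y hy ↦ by
    by_cases hyU : y ∈ U
    · rw [piecewise_eq_of_mem _ _ _ hyU, hUV ⟨hyU, hy⟩]
    · exact piecewise_eq_of_notMem _ _ _ hyU
  refine ⟨U.piecewise f g, ?_, hhU, hhV⟩
  rintro y (hy | hy)
  · exact (hf y hy).congr (hhU.eventuallyEq_of_mem (hU.mem_nhds hy)).symm
  · exact (hg y hy).congr (hhV.eventuallyEq_of_mem (hV.mem_nhds hy)).symm

/-- The slices `u ↦ P u z.2` near `z.1` and `u ↦ P u w.2` near `w.1` are germs of a single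
analytic function on an interval. -/
def SlicesContinue (P : ℝ → ℝ → E) (z w : ℝ × ℝ) : Prop :=
  ∃ (J : Set ℝ) (H : ℝ → E), IsOpen J ∧ IsPreconnected J ∧ z.1 ∈ J ∧ w.1 ∈ J ∧
    AnalyticOnNhd ℝ H J ∧ H =ᶠ[𝓝 z.1] (fun u ↦ P u z.2) ∧ H =ᶠ[𝓝 w.1] (fun u ↦ P u w.2)

namespace SlicesContinue

variable {P : ℝ → ℝ → E} {x y z w : ℝ × ℝ}

theorem symm (h : SlicesContinue P z w) : SlicesContinue P w z :=
  let ⟨J, H, hJ, hJ', hz, hw, hH, hHz, hHw⟩ := h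
  ⟨J, H, hJ, hJ', hw, hz, hH, hHw, hHz⟩

theorem trans (hxy : SlicesContinue P x y) (hyz : SlicesContinue P y z) :
    SlicesContinue P x z := by
  obtain ⟨J₁, H₁, hJ₁, hJ₁', hx, hy₁, hH₁, hH₁x, hH₁y⟩ := hxy
  obtain ⟨J₂, H₂, hJ₂, hJ₂', hy₂, hz, hH₂, hH₂y, hH₂z⟩ := hyz
  obtain ⟨H, hH, hHH₁, hHH₂⟩ := exists_analyticOnNhd_union_eqOn hJ₁ hJ₂ hJ₁' hJ₂' hH₁ hH₂ hy₁ hy₂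
    (hH₁y.trans hH₂y.symm)
  exact ⟨J₁ ∪ J₂, H, hJ₁.union hJ₂, hJ₁'.union y.1 hy₁ hy₂ hJ₂', Or.inl hx, Or.inr hz, hH,
    (hHH₁.eventuallyEq_of_mem (hJ₁.mem_nhds hx)).trans hH₁x,
    (hHH₂.eventuallyEq_of_mem (hJ₂.mem_nhds hz)).trans hH₂z⟩

theorem apply_eq (h : SlicesContinue P z w) (hzw : z.1 = w.1) : P z.1 z.2 = P w.1 w.2 := by
  obtain ⟨J, H, -, -, -, -, -, hHz, hHw⟩ := h
  rw [← hHz.eq_of_nhds, ← hHw.eq_of_nhds, hzw]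

end SlicesContinue

section Slices

variable {P : ℝ → ℝ → E} {s : Set (ℝ × ℝ)}

theorem slicesContinue_of_mem_ball (hP : AnalyticOnNhd ℝ (uncurry P) s)
    (hv : ∀ z ∈ s, deriv (fun v ↦ P z.1 v) z.2 = 0) {z w : ℝ × ℝ} {r : ℝ}
    (hball : ball z r ⊆ s) (hw : w ∈ ball z r) : SlicesContinue P z w := by
  rw [← ball_prod_same] at hball hw
  have hr : 0 < r := pos_of_mem_ball hw.1
  have hvert : ∀ u ∈ ball z.1 r, P u z.2 = P u w.2 := fun u hu ↦
    isOpen_ball.is_const_of_deriv_eq_zero (convex_ball _ _).isPreconnected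
      (fun v hv' ↦
        (hP (u, v) (hball ⟨hu, hv'⟩)).curry_right.differentiableAt.differentiableWithinAt)
      (fun v hv' ↦ hv (u, v) (hball ⟨hu, hv'⟩)) (mem_ball_self hr) hw.2
  exact ⟨ball z.1 r, fun u ↦ P u z.2, isOpen_ball, (convex_ball _ _).isPreconnected,
    mem_ball_self hr, hw.1, fun u hu ↦ (hP (u, z.2) (hball ⟨hu, mem_ball_self hr⟩)).curry_left,
    EventuallyEq.rfl, eventuallyEq_of_mem (isOpen_ball.mem_nhds hw.1) hvert⟩

theorem apply_eq_of_fst_eq_of_deriv_snd_eq_zero (hs : IsOpen s) (hs' : IsPreconnected s)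
    (hP : AnalyticOnNhd ℝ (uncurry P) s) (hv : ∀ z ∈ s, deriv (fun v ↦ P z.1 v) z.2 = 0)
    {p q : ℝ × ℝ} (hp : p ∈ s) (hq : q ∈ s) (hpq : p.1 = q.1) : P p.1 p.2 = P q.1 q.2 := by
  refine (hs'.induction₂ (SlicesContinue P) (fun z hz ↦ ?_) (fun _ _ _ _ _ _ ↦ .trans)
    (fun _ _ _ _ ↦ .symm) hp hq).apply_eq hpq
  obtain ⟨r, hr, hball⟩ := Metric.isOpen_iff.1 hs z hz
  filter_upwards [nhdsWithin_le_nhds (ball_mem_nhds z hr)] with w hw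
  exact slicesContinue_of_mem_ball hP hv hball hw

theorem apply_eq_of_snd_eq_of_deriv_fst_eq_zero (hs : IsOpen s) (hs' : IsPreconnected s)
    (hP : AnalyticOnNhd ℝ (uncurry P) s) (hu : ∀ z ∈ s, deriv (fun u ↦ P u z.2) z.1 = 0)
    {p q : ℝ × ℝ} (hp : p ∈ s) (hq : q ∈ s) (hpq : p.2 = q.2) : P p.1 p.2 = P q.1 q.2 :=
  apply_eq_of_fst_eq_of_deriv_snd_eq_zero (P := swap P) (s := Prod.swap ⁻¹' s)
    (hs.preimage continuous_swap)
    (by simpa [← image_swap_eq_preimage_swap] using hs'.image _ continuous_swap.continuousOn)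
    (fun z hz ↦ (hP _ hz).comp (analyticAt_snd.prod analyticAt_fst))
    (fun z hz ↦ hu _ hz) (p := p.swap) (q := q.swap) hp hq hpq

theorem eq_add_sub_of_deriv_deriv_eq_zero {I J : Set ℝ} (hI : IsOpen I) (hI' : IsPreconnected I)
    (hJ : IsOpen J) (hJ' : IsPreconnected J) {a b : ℝ} (ha : a ∈ I) (hb : b ∈ J)
    (hu : ∀ u ∈ I, ∀ v ∈ J, DifferentiableAt ℝ (fun u ↦ P u v) u)
    (hmix : ∀ u ∈ I, ∀ v ∈ J, HasDerivAt (fun v ↦ deriv (fun u ↦ P u v) u) 0 v) :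
    ∀ u ∈ I, ∀ v ∈ J, P u v = P u b + (P a v - P a b) := by
  intro u hu' v hv
  have hslice : ∀ t ∈ I, deriv (fun u ↦ P u v) t = deriv (fun u ↦ P u b) t := fun t ht ↦
    hJ.is_const_of_deriv_eq_zero hJ'
      (fun w hw ↦ (hmix t ht w hw).differentiableAt.differentiableWithinAt)
      (fun w hw ↦ (hmix t ht w hw).deriv) hv hb
  have hdiff : P u v - P u b = P a v - P a b :=
    hI.is_const_of_deriv_eq_zero hI' (f := fun t ↦ P t v - P t b)
      (fun t ht ↦ ((hu t ht v hv).sub (hu t ht b hb)).differentiableWithinAt)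
      (fun t ht ↦ by
        rw [((hu t ht v hv).hasDerivAt.fun_sub (hu t ht b hb).hasDerivAt).deriv, hslice t ht,
          sub_self, Pi.zero_apply]) hu' ha
  rw [← hdiff]
  abel

theorem analyticOnNhd_deriv_fst (hs : IsOpen s) (hP : AnalyticOnNhd ℝ (uncurry P) s) :
    AnalyticOnNhd ℝ (fun z : ℝ × ℝ ↦ deriv (fun u ↦ P u z.2) z.1) s := by
  refine ((ContinuousLinearMap.apply ℝ E ((1 : ℝ), (0 : ℝ))).comp_analyticOnNhd
    (hP.fderiv_of_isOpen hs)).congr hs fun z hz ↦ ?_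
  have hline : HasDerivAt (fun u : ℝ ↦ (u, z.2)) ((1 : ℝ), (0 : ℝ)) z.1 :=
    (hasDerivAt_id _).prodMk (hasDerivAt_const _ _)
  exact ((hP z hz).differentiableAt.hasFDerivAt.comp_hasDerivAt z.1 hline).deriv.symm

theorem analyticOnNhd_deriv_snd (hs : IsOpen s) (hP : AnalyticOnNhd ℝ (uncurry P) s) :
    AnalyticOnNhd ℝ (fun z : ℝ × ℝ ↦ deriv (fun v ↦ P z.1 v) z.2) s := by
  refine ((ContinuousLinearMap.apply ℝ E ((0 : ℝ), (1 : ℝ))).comp_analyticOnNhd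
    (hP.fderiv_of_isOpen hs)).congr hs fun z hz ↦ ?_
  have hline : HasDerivAt (fun v : ℝ ↦ (z.1, v)) ((0 : ℝ), (1 : ℝ)) z.2 :=
    (hasDerivAt_const _ _).prodMk (hasDerivAt_id _)
  exact ((hP z hz).differentiableAt.hasFDerivAt.comp_hasDerivAt z.2 hline).deriv.symm

end Slices

end OneVariableContinuation

section SeparatedPDE

variable {ψ F G : ℝ → ℝ} {I J : Set ℝ}

theorem deriv_deriv_log {f : ℝ → ℝ} {x : ℝ} (hf : AnalyticAt ℝ f x) (hx : 0 < f x) :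
    deriv (deriv fun y ↦ Real.log (f y)) x
      = (deriv (deriv f) x * f x - deriv f x ^ 2) / f x ^ 2 := by
  have hlog : deriv (fun y ↦ Real.log (f y)) =ᶠ[𝓝 x] fun y ↦ deriv f y / f y := by
    filter_upwards [hf.eventually_analyticAt, hf.continuousAt.eventually (lt_mem_nhds hx)]
      with y hy hpos
    exact (hy.differentiableAt.hasDerivAt.log hpos.ne').deriv
  rw [hlog.deriv_eq,
    (hf.deriv.differentiableAt.hasDerivAt.fun_div hf.differentiableAt.hasDerivAt hx.ne').deriv]
  ring

-- `g₀, g₁, g₂` stand for `G v, G' v, G'' v` with `v` frozen.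
theorem separated_identity_deriv (hI : IsOpen I) (hψ : Differentiable ℝ ψ)
    (hF : AnalyticOnNhd ℝ F I) {g₀ g₁ g₂ : ℝ}
    (hE : ∀ u ∈ I, deriv F u ^ 2 + g₁ ^ 2 - (F u + g₀) * (deriv (deriv F) u + g₂) = ψ (F u + g₀))
    {u : ℝ} (hu : u ∈ I) :
    deriv F u * (deriv (deriv F) u - g₂) - (F u + g₀) * deriv (deriv (deriv F)) u
      = deriv ψ (F u + g₀) * deriv F u := by
  have hF' := hF.deriv_of_isOpen hI
  have h₁ := (hF u hu).differentiableAt.hasDerivAt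
  have h₂ := (hF' u hu).differentiableAt.hasDerivAt
  have h₃ := ((hF'.deriv_of_isOpen hI) u hu).differentiableAt.hasDerivAt
  have hlhs := ((h₂.fun_pow 2).add_const (g₁ ^ 2)).fun_sub
    ((h₁.add_const g₀).fun_mul (h₃.add_const g₂))
  have hrhs := (hψ _).hasDerivAt.comp u (h₁.add_const g₀)
  have := hlhs.unique (hrhs.congr_of_eventuallyEq (eventuallyEq_of_mem (hI.mem_nhds hu) hE))
  linear_combination this

theorem deriv_mul_deriv_mul_eq_zero_of_separated (hI : IsOpen I) (hJ : IsOpen J)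
    (hψ : Differentiable ℝ ψ) (hψ' : Differentiable ℝ (deriv ψ))
    (hF : AnalyticOnNhd ℝ F I) (hG : AnalyticOnNhd ℝ G J)
    (hE : ∀ u ∈ I, ∀ v ∈ J, deriv F u ^ 2 + deriv G v ^ 2
      - (F u + G v) * (deriv (deriv F) u + deriv (deriv G) v) = ψ (F u + G v))
    {a b : ℝ} (ha : a ∈ I) (hb : b ∈ J) :
    deriv F a * deriv G b
      * ((F a + G b) * deriv (deriv ψ) (F a + G b) - 2 * deriv ψ (F a + G b)) = 0 := by
  have hu : ∀ v ∈ J, ∀ u ∈ I, deriv F u * (deriv (deriv F) u - deriv (deriv G) v)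
      - (F u + G v) * deriv (deriv (deriv F)) u = deriv ψ (F u + G v) * deriv F u :=
    fun v hv u hu ↦ separated_identity_deriv (g₁ := deriv G v) hI hψ hF (fun u hu ↦ hE u hu v hv) hu
  have hv : ∀ u ∈ I, ∀ v ∈ J, deriv G v * (deriv (deriv G) v - deriv (deriv F) u)
      - (G v + F u) * deriv (deriv (deriv G)) v = deriv ψ (G v + F u) * deriv G v :=
    fun u hu v hv ↦ separated_identity_deriv (g₁ := deriv F u) hJ hψ hG
      (fun v hv ↦ by rw [add_comm (G v)]; linear_combination hE u hu v hv) hv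
  have hmixed : -(deriv F a * deriv (deriv (deriv G)) b) - deriv G b * deriv (deriv (deriv F)) a
      = deriv (deriv ψ) (F a + G b) * deriv G b * deriv F a := by
    have hG' := hG.deriv_of_isOpen hJ
    have h₁ := (hG b hb).differentiableAt.hasDerivAt
    have h₃ := ((hG'.deriv_of_isOpen hJ) b hb).differentiableAt.hasDerivAt
    have hlhs := ((h₃.const_sub (deriv (deriv F) a)).const_mul (deriv F a)).fun_sub
      ((h₁.const_add (F a)).mul_const (deriv (deriv (deriv F)) a))
    have hrhs := ((hψ' _).hasDerivAt.comp b (h₁.const_add (F a))).mul_const (deriv F a)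
    have := hlhs.unique (hrhs.congr_of_eventuallyEq
      (eventuallyEq_of_mem (hJ.mem_nhds hb) fun v hv ↦ hu v hv a ha))
    linear_combination this
  have e₂ := hu b hb a ha
  have e₃ := hv a ha b hb
  rw [add_comm (G b)] at e₃
  -- `G' e₂ + F' e₃ - (F + G) hmixed` cancels all third derivatives
  linear_combination deriv G b * e₂ + deriv F a * e₃ - (F a + G b) * hmixed

end SeparatedPDE

section PDE

variable {P : ℝ → ℝ → ℝ} {s : Set (ℝ × ℝ)}

theorem pde_polynomial_form {φ : ℝ → ℝ} {p : ℝ × ℝ} (hP : AnalyticAt ℝ (uncurry P) p)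
    (hpos : 0 < P p.1 p.2)
    (hpde : -(deriv (fun u' ↦ deriv (fun u'' ↦ Real.log (P u'' p.2)) u') p.1)
        - deriv (fun v' ↦ deriv (fun v'' ↦ Real.log (P p.1 v'')) v') p.2 = φ (P p.1 p.2)) :
    deriv (fun u ↦ P u p.2) p.1 ^ 2 + deriv (fun v ↦ P p.1 v) p.2 ^ 2
      - P p.1 p.2 * (deriv (deriv fun u ↦ P u p.2) p.1 + deriv (deriv fun v ↦ P p.1 v) p.2)
      = P p.1 p.2 ^ 2 * φ (P p.1 p.2) := by
  rw [deriv_deriv_log (f := fun u ↦ P u p.2) hP.curry_left hpos,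
    deriv_deriv_log (f := fun v ↦ P p.1 v) hP.curry_right hpos] at hpde
  field_simp at hpde
  linear_combination hpde

theorem deriv_mul_deriv_mul_eq_zero {ψ : ℝ → ℝ} (hs : IsOpen s)
    (hP : AnalyticOnNhd ℝ (uncurry P) s) (hψ : Differentiable ℝ ψ)
    (hψ' : Differentiable ℝ (deriv ψ))
    (hmix : ∀ p ∈ s, deriv (fun v ↦ deriv (fun u ↦ P u v) p.1) p.2 = 0)
    (hE : ∀ p ∈ s, deriv (fun u ↦ P u p.2) p.1 ^ 2 + deriv (fun v ↦ P p.1 v) p.2 ^ 2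
      - P p.1 p.2 * (deriv (deriv fun u ↦ P u p.2) p.1 + deriv (deriv fun v ↦ P p.1 v) p.2)
      = ψ (P p.1 p.2))
    {p : ℝ × ℝ} (hp : p ∈ s) :
    deriv (fun u ↦ P u p.2) p.1 * deriv (fun v ↦ P p.1 v) p.2
      * (P p.1 p.2 * deriv (deriv ψ) (P p.1 p.2) - 2 * deriv ψ (P p.1 p.2)) = 0 := by
  obtain ⟨a, b⟩ := p
  obtain ⟨r, hr, hball⟩ := Metric.isOpen_iff.1 hs _ hp
  rw [← ball_prod_same] at hball
  have hmem : ∀ u ∈ ball a r, ∀ v ∈ ball b r, (u, v) ∈ s := fun u hu v hv ↦ hball ⟨hu, hv⟩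
  have ha := mem_ball_self (x := a) hr
  have hb := mem_ball_self (x := b) hr
  have hsplit := eq_add_sub_of_deriv_deriv_eq_zero isOpen_ball
    (convex_ball a r).isPreconnected isOpen_ball (convex_ball b r).isPreconnected ha hb
    (fun u hu v hv ↦ (hP (u, v) (hmem u hu v hv)).curry_left.differentiableAt)
    (fun u hu v hv ↦ hmix (u, v) (hmem u hu v hv) ▸ ((analyticOnNhd_deriv_fst hs hP) (u, v)
      (hmem u hu v hv)).curry_right.differentiableAt.hasDerivAt)
  set F : ℝ → ℝ := fun u ↦ P u b
  set G : ℝ → ℝ := fun v ↦ P a v - P a b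
  have hF : AnalyticOnNhd ℝ F (ball a r) := fun u hu ↦ (hP (u, b) (hmem u hu b hb)).curry_left
  have hG : AnalyticOnNhd ℝ G (ball b r) := fun v hv ↦
    (hP (a, v) (hmem a ha v hv)).curry_right.sub analyticAt_const
  have hPu : ∀ v ∈ ball b r, EqOn (deriv fun u ↦ P u v) (deriv F) (ball a r) := fun v hv ↦ by
    simpa only [deriv_add_const'] using
      EqOn.deriv (g := fun u ↦ F u + G v) (fun u hu ↦ hsplit u hu v hv) isOpen_ball
  have hPv : ∀ u ∈ ball a r, EqOn (deriv fun v ↦ P u v) (deriv G) (ball b r) := fun u hu ↦ by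
    simpa only [deriv_const_add'] using
      EqOn.deriv (g := fun v ↦ F u + G v) (fun v hv ↦ hsplit u hu v hv) isOpen_ball
  have hE' : ∀ u ∈ ball a r, ∀ v ∈ ball b r, deriv F u ^ 2 + deriv G v ^ 2
      - (F u + G v) * (deriv (deriv F) u + deriv (deriv G) v) = ψ (F u + G v) := by
    intro u hu v hv
    rw [← hPu v hv hu, ← (hPu v hv).deriv isOpen_ball hu, ← hPv u hu hv,
      ← (hPv u hu).deriv isOpen_ball hv, ← hsplit u hu v hv]
    exact hE (u, v) (hmem u hu v hv)
  have key := deriv_mul_deriv_mul_eq_zero_of_separated isOpen_ball isOpen_ball hψ hψ' hF hG hE'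
    ha hb
  rwa [deriv_sub_const, ← hsplit a ha b hb] at key

end PDE

/-- A positive analytic function `P` near the origin with `P(0,0) = 1`, `P_{uv} = 0`
and `Δ log P = φ(P)` (with `Δ f = −f_{uu} − f_{vv}` and `φ` analytic), such that
`ψ(r) = r²φ(r)` satisfies `ψ''(1) − 2ψ'(1) ≠ 0`, depends only on one of the two
variables: `P(u,v) = 1 + f(u)` or `P(u,v) = 1 + g(v)`. -/
theorem P_depends_on_one_variable
    (P : ℝ → ℝ → ℝ) (φ : ℝ → ℝ) (s : Set (ℝ × ℝ))
    (hs : IsOpen s) (hconn : IsPreconnected s) (h0 : ((0 : ℝ), (0 : ℝ)) ∈ s)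
    (hP : ∀ p ∈ s, AnalyticAt ℝ (Function.uncurry P) p)
    (hφ : ∀ r : ℝ, AnalyticAt ℝ φ r)
    (hpos : ∀ p ∈ s, 0 < P p.1 p.2)
    (hP00 : P 0 0 = 1)
    (hmix : ∀ p ∈ s, deriv (fun v => deriv (fun u => P u v) p.1) p.2 = 0)
    (hpde : ∀ p ∈ s,
      -(deriv (fun u' => deriv (fun u'' => Real.log (P u'' p.2)) u') p.1)
        - deriv (fun v' => deriv (fun v'' => Real.log (P p.1 v'')) v') p.2
        = φ (P p.1 p.2))
    (hψ : iteratedDeriv 2 (fun r : ℝ => r ^ 2 * φ r) 1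
        - 2 * deriv (fun r : ℝ => r ^ 2 * φ r) 1 ≠ 0) :
    (∃ f : ℝ → ℝ, f 0 = 0 ∧ ∀ p ∈ s, P p.1 p.2 = 1 + f p.1)
      ∨ (∃ g : ℝ → ℝ, g 0 = 0 ∧ ∀ p ∈ s, P p.1 p.2 = 1 + g p.2) := by
  set ψ : ℝ → ℝ := fun r ↦ r ^ 2 * φ r
  have hψ₀ : AnalyticOnNhd ℝ ψ univ := fun r _ ↦ (analyticAt_id.pow 2).mul (hφ r)
  have hψ₁ := hψ₀.deriv
  have hψ₂ := hψ₁.deriv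
  have hc : AnalyticOnNhd ℝ (fun z : ℝ × ℝ ↦ P z.1 z.2 * deriv (deriv ψ) (P z.1 z.2)
      - 2 * deriv ψ (P z.1 z.2)) s := fun z hz ↦
    ((hP z hz).mul ((hψ₂ _ trivial).comp (hP z hz))).sub
      (analyticAt_const.mul ((hψ₁ _ trivial).comp (hP z hz)))
  have hprod := fun z hz ↦ deriv_mul_deriv_mul_eq_zero hs hP
    (fun r ↦ (hψ₀ r trivial).differentiableAt) (fun r ↦ (hψ₁ r trivial).differentiableAt) hmix
    (fun p hp ↦ pde_polynomial_form (hP p hp) (hpos p hp) (hpde p hp)) (p := z) hz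
  have hPu := analyticOnNhd_deriv_fst hs hP
  have hPv := analyticOnNhd_deriv_snd hs hP
  rcases (hPu.mul hPv).eqOn_zero_or_eqOn_zero_of_mul hc hs hconn hprod with hAB | hc0
  · rcases hPu.eqOn_zero_or_eqOn_zero_of_mul hPv hs hconn (fun z hz ↦ hAB hz) with hA | hB
    · obtain ⟨g, hg⟩ := exists_eq_comp_of_fiberwise_eq (g := fun p : ℝ × ℝ ↦ P p.1 p.2)
        fun p hp q hq ↦
          apply_eq_of_snd_eq_of_deriv_fst_eq_zero hs hconn hP (fun z hz ↦ hA hz) hp hq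
      exact Or.inr ⟨fun v ↦ g v - 1, by simp [← hg _ h0, hP00], fun p hp ↦ by simp [hg p hp]⟩
    · obtain ⟨f, hf⟩ := exists_eq_comp_of_fiberwise_eq (g := fun p : ℝ × ℝ ↦ P p.1 p.2)
        fun p hp q hq ↦
          apply_eq_of_fst_eq_of_deriv_snd_eq_zero hs hconn hP (fun z hz ↦ hB hz) hp hq
      exact Or.inl ⟨fun u ↦ f u - 1, by simp [← hf _ h0, hP00], fun p hp ↦ by simp [hf p hp]⟩
  · refine absurd (hc0 h0) ?_
    simpa [hP00, iteratedDeriv_succ, iteratedDeriv_one] using hψ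
end

section
/- Let Σ be a surface in a 3-dimensional space form of curvature σ, given in isothermal coordinates with first fundamental form E(du²+dv²) and second fundamental form with matrix [[0,1],[1,0]] (asymptotic line coordinates). Then the condition div(S(∇̄K)) = 0 on Σ, where S is the shape operator and K = σ − 1/E² the Gauss curvature, is equivalent to the identity E·E_{uv} − 4E_u·E_v = 0. -/
/-!
Since `K_v = 2E_v/E³`, one has `∂_u(K_v/E) = 2∂_u(E_v/E⁴) = 2(E·E_{uv} − 4E_uE_v)/E⁵`.
Exchanging the roles of `u` and `v` and using the symmetry of second derivatives, `∂_v(K_u/E)` is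
the same expression, so `div(S(∇̄K)) = 4(E·E_{uv} − 4E_uE_v)/E⁶`, and `E > 0`.
-/

open Filter Topology Function

section Partials

variable {F : Type*} [NormedAddCommGroup F] [NormedSpace ℝ F]

theorem HasFDerivAt.hasDerivAt_left {f : ℝ × ℝ → F} {L : ℝ × ℝ →L[ℝ] F} {x y : ℝ}
    (h : HasFDerivAt f L (x, y)) : HasDerivAt (fun u => f (u, y)) (L (1, 0)) x :=
  h.comp_hasDerivAt x ((hasDerivAt_id x).prodMk (hasDerivAt_const x y))

theorem HasFDerivAt.hasDerivAt_right {f : ℝ × ℝ → F} {L : ℝ × ℝ →L[ℝ] F} {x y : ℝ}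
    (h : HasFDerivAt f L (x, y)) : HasDerivAt (fun v => f (x, v)) (L (0, 1)) y :=
  h.comp_hasDerivAt y ((hasDerivAt_const y x).prodMk (hasDerivAt_id y))

theorem ContDiffAt.eventually_differentiableAt {V : Type*} [NormedAddCommGroup V]
    [NormedSpace ℝ V] {f : V → F} {p : V} (h : ContDiffAt ℝ 1 f p) :
    ∀ᶠ q in 𝓝 p, DifferentiableAt ℝ f q :=
  (h.eventually (by simp)).mono fun _ hq => hq.differentiableAt one_ne_zero

end Partials

section TwoVariables

variable {E : ℝ → ℝ → ℝ} {x y : ℝ}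

theorem ContDiffAt.eventually_deriv_left_eq_fderiv (h : ContDiffAt ℝ 1 (uncurry E) (x, y)) :
    ∀ᶠ p in 𝓝 (x, y), deriv (fun u => E u p.2) p.1 = fderiv ℝ (uncurry E) p (1, 0) :=
  h.eventually_differentiableAt.mono fun _ hp => hp.hasFDerivAt.hasDerivAt_left.deriv

theorem ContDiffAt.eventually_deriv_right_eq_fderiv (h : ContDiffAt ℝ 1 (uncurry E) (x, y)) :
    ∀ᶠ p in 𝓝 (x, y), deriv (fun v => E p.1 v) p.2 = fderiv ℝ (uncurry E) p (0, 1) :=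
  h.eventually_differentiableAt.mono fun _ hp => hp.hasFDerivAt.hasDerivAt_right.deriv

theorem ContDiffAt.hasFDerivAt_fderiv (h : ContDiffAt ℝ 2 (uncurry E) (x, y)) :
    HasFDerivAt (fderiv ℝ (uncurry E)) (fderiv ℝ (fderiv ℝ (uncurry E)) (x, y)) (x, y) :=
  ((h.fderiv_right (by norm_num)).differentiableAt one_ne_zero).hasFDerivAt

theorem ContDiffAt.hasDerivAt_deriv_right_left (h : ContDiffAt ℝ 2 (uncurry E) (x, y)) :
    HasDerivAt (fun u => deriv (fun v => E u v) y)
      (fderiv ℝ (fderiv ℝ (uncurry E)) (x, y) (1, 0) (0, 1)) x := by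
  have hline : HasDerivAt (fun u => fderiv ℝ (uncurry E) (u, y) (0, 1))
      (fderiv ℝ (fderiv ℝ (uncurry E)) (x, y) (1, 0) (0, 1)) x :=
    (ContinuousLinearMap.apply ℝ ℝ ((0, 1) : ℝ × ℝ)).hasFDerivAt.comp_hasDerivAt x
      h.hasFDerivAt_fderiv.hasDerivAt_left
  exact hline.congr_of_eventuallyEq <| ((Continuous.prodMk_left y).tendsto x).eventually
    (h.of_le (by norm_num)).eventually_deriv_right_eq_fderiv

theorem ContDiffAt.hasDerivAt_deriv_left_right (h : ContDiffAt ℝ 2 (uncurry E) (x, y)) :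
    HasDerivAt (fun v => deriv (fun u => E u v) x)
      (fderiv ℝ (fderiv ℝ (uncurry E)) (x, y) (0, 1) (1, 0)) y := by
  have hline : HasDerivAt (fun v => fderiv ℝ (uncurry E) (x, v) (1, 0))
      (fderiv ℝ (fderiv ℝ (uncurry E)) (x, y) (0, 1) (1, 0)) y :=
    (ContinuousLinearMap.apply ℝ ℝ ((1, 0) : ℝ × ℝ)).hasFDerivAt.comp_hasDerivAt y
      h.hasFDerivAt_fderiv.hasDerivAt_right
  exact hline.congr_of_eventuallyEq <| ((Continuous.prodMk_right x).tendsto y).eventually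
    (h.of_le (by norm_num)).eventually_deriv_left_eq_fderiv

theorem ContDiffAt.deriv_deriv_comm (h : ContDiffAt ℝ 2 (uncurry E) (x, y)) :
    deriv (fun v => deriv (fun u => E u v) x) y = deriv (fun u => deriv (fun v => E u v) y) x := by
  rw [h.hasDerivAt_deriv_left_right.deriv, h.hasDerivAt_deriv_right_left.deriv]
  exact h.isSymmSndFDerivAt (by simp) _ _

end TwoVariables

theorem HasDerivAt.const_sub_one_div_sq {g : ℝ → ℝ} {g' y : ℝ} (c : ℝ) (hg : HasDerivAt g g' y)
    (hy : g y ≠ 0) : HasDerivAt (fun v => c - 1 / g v ^ 2) (2 * g' / g y ^ 3) y := by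
  refine ((hasDerivAt_const y c).sub
    ((hasDerivAt_const y 1).div (hg.fun_pow 2) (pow_ne_zero 2 hy))).congr_deriv ?_
  field_simp
  ring

theorem ContDiffAt.deriv_deriv_const_sub_one_div_sq_div {E : ℝ → ℝ → ℝ} {x y : ℝ} (σ : ℝ)
    (h : ContDiffAt ℝ 2 (uncurry E) (x, y)) (hE : E x y ≠ 0) :
    deriv (fun u => deriv (fun v => σ - 1 / E u v ^ 2) y / E u y) x
      = 2 * (E x y * deriv (fun u => deriv (fun v => E u v) y) x
          - 4 * deriv (fun u => E u y) x * deriv (fun v => E x v) y) / E x y ^ 5 := by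
  have hK : (fun u => deriv (fun v => σ - 1 / E u v ^ 2) y / E u y)
      =ᶠ[𝓝 x] fun u => 2 * deriv (fun v => E u v) y / E u y ^ 4 := by
    filter_upwards [((Continuous.prodMk_left y).tendsto x).eventually
      (((h.of_le (by norm_num)).eventually_differentiableAt).and
        (h.continuousAt.eventually_ne hE))] with u ⟨hdiff, hu⟩
    have hEv : HasDerivAt (fun v => E u v) _ y := hdiff.hasFDerivAt.hasDerivAt_right
    replace hu : E u y ≠ 0 := hu
    rw [(hEv.const_sub_one_div_sq σ hu).deriv, hEv.deriv]
    field_simp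
  have hEu : HasDerivAt (fun u => E u y) (deriv (fun u => E u y) x) x :=
    h.differentiableAt (by simp) |>.hasFDerivAt.hasDerivAt_left |>.differentiableAt.hasDerivAt
  have hEvu := h.hasDerivAt_deriv_right_left.differentiableAt.hasDerivAt
  rw [hK.deriv_eq]
  refine ((hEvu.const_mul 2).div (hEu.fun_pow 4) (pow_ne_zero 4 hE)).deriv.trans ?_
  field_simp
  ring

/-- For a minimal surface in a space form of curvature `σ` in isothermal asymptotic-line
coordinates (first fundamental form `E(du²+dv²)`, second fundamental form `[[0,1],[1,0]]`),
the divergence condition `div(S(∇̄K)) = 0`, expressed in coordinates as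
`(1/E)(∂_u(K_v/E) + ∂_v(K_u/E)) = 0` with `K = σ − 1/E²`, is equivalent to
`E·E_{uv} − 4E_u·E_v = 0`. -/
theorem divergence_condition_iff
    (σ : ℝ) (E : ℝ → ℝ → ℝ) (s : Set (ℝ × ℝ)) (hs : IsOpen s)
    (hE : ContDiffOn ℝ (⊤ : ℕ∞) (Function.uncurry E) s)
    (hpos : ∀ p ∈ s, 0 < E p.1 p.2) :
    ∀ p ∈ s,
      ((1 / E p.1 p.2) *
          (deriv (fun u => deriv (fun v => σ - 1 / (E u v) ^ 2) p.2 / E u p.2) p.1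
            + deriv (fun v => deriv (fun u => σ - 1 / (E u v) ^ 2) p.1 / E p.1 v) p.2) = 0
        ↔ E p.1 p.2 * deriv (fun v => deriv (fun u => E u v) p.1) p.2
            - 4 * deriv (fun u => E u p.2) p.1 * deriv (fun v => E p.1 v) p.2 = 0) := by
  rintro ⟨x, y⟩ hp
  have h : ContDiffAt ℝ 2 (uncurry E) (x, y) :=
    (hE.contDiffAt (hs.mem_nhds hp)).of_le (by norm_cast)
  -- `∂_v(K_u/E)` is the `∂_u(K_v/E)` term of the transposed function `(v, u) ↦ E u v`.
  have hswap : ContDiffAt ℝ 2 (uncurry fun v u => E u v) (y, x) :=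
    h.comp (y, x) (contDiffAt_snd.prodMk contDiffAt_fst)
  have he : E x y ≠ 0 := (hpos _ hp).ne'
  have hv := hswap.deriv_deriv_const_sub_one_div_sq_div σ he
  beta_reduce at hv
  rw [h.deriv_deriv_const_sub_one_div_sq_div σ he, hv, ← h.deriv_deriv_comm]
  rw [show ∀ a b c : ℝ, 1 / E x y * (2 * (E x y * a - 4 * b * c) / E x y ^ 5
      + 2 * (E x y * a - 4 * c * b) / E x y ^ 5) = 4 * (E x y * a - 4 * b * c) / E x y ^ 6 by
    intros; field_simp; ring]
  simp [he]
end

section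
/- Let M be a stochastically complete Riemannian manifold, Ω ⊂ M a smooth domain with Ω₊ = Ω, Ω₋ = M∖Ω̄, Σ = ∂Ω, and u₊ the unique bounded solution of the heat equation on M with initial data χ_{Ω₊}. Suppose there exist a subgroup 𝒯 of isometries of M, each element of which preserves Ω₊ and Ω₋, and an isometry Ψ with Ψ(Ω₊)=Ω₋ and Ψ(Ω₋)=Ω₊, such that for every x ∈ Σ there is T ∈ 𝒯 with Ψ(x) = T(x). Then u₊(t,x) = 1/2 for all t > 0 and x ∈ Σ. -/
open MeasureTheory

/-- Half-property from a group of isometries preserving `Ω₊`, `Ω₋` together with an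
isometry `Ψ` interchanging them and agreeing on the boundary `Σ` with elements of the
group.  `IsSol u f` abstracts "`u` solves the heat equation on `(0,∞)×M` with initial
datum `f`"; the structural hypotheses encode invariance under isometries, linearity,
that constants are solutions, and uniqueness of bounded solutions with a.e.-equal
initial data (stochastic completeness).  Then the Cauchy temperature `u₊`
(bounded solution with initial datum `χ_{Ω₊}`) equals `1/2` on `(0,∞)×Σ`. -/
theorem half_property_of_group_and_swap
    {M : Type*} [MetricSpace M] [MeasurableSpace M] (μ : Measure M)
    (IsSol : (ℝ → M → ℝ) → (M → ℝ) → Prop)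
    (Ωp Ωn Sb : Set M)
    (hpart : ∀ x : M,
      (x ∈ Ωp ∧ x ∉ Ωn ∧ x ∉ Sb) ∨ (x ∈ Ωn ∧ x ∉ Ωp ∧ x ∉ Sb)
        ∨ (x ∈ Sb ∧ x ∉ Ωp ∧ x ∉ Ωn))
    (hSnull : μ Sb = 0)
    (hIso : ∀ (u : ℝ → M → ℝ) (f : M → ℝ) (Φ : M → M), Isometry Φ →
      Function.Bijective Φ → IsSol u f → IsSol (fun t x => u t (Φ x)) (fun x => f (Φ x)))
    (hAdd : ∀ (u v : ℝ → M → ℝ) (f g : M → ℝ), IsSol u f → IsSol v g →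
      IsSol (fun t x => u t x + v t x) (fun x => f x + g x))
    (hConst : IsSol (fun _ _ => (1 : ℝ)) (fun _ => (1 : ℝ)))
    (hUniq : ∀ (u v : ℝ → M → ℝ) (f g : M → ℝ), IsSol u f → IsSol v g →
      (∃ C, ∀ t x, |u t x| ≤ C) → (∃ C, ∀ t x, |v t x| ≤ C) →
      (∀ᵐ x ∂μ, f x = g x) → ∀ t > 0, ∀ x, u t x = v t x)
    (up un : ℝ → M → ℝ)
    (hup : IsSol up (Set.indicator Ωp fun _ => (1 : ℝ)))
    (hun : IsSol un (Set.indicator Ωn fun _ => (1 : ℝ)))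
    (hbp : ∃ C, ∀ t x, |up t x| ≤ C) (hbn : ∃ C, ∀ t x, |un t x| ≤ C)
    (𝒯 : Set (M → M))
    (h𝒯 : ∀ T ∈ 𝒯, Isometry T ∧ Function.Bijective T)
    (h𝒯pres : ∀ T ∈ 𝒯, T '' Ωp = Ωp ∧ T '' Ωn = Ωn)
    (Ψ : M → M) (hΨiso : Isometry Ψ) (hΨbij : Function.Bijective Ψ)
    (hΨp : Ψ '' Ωp = Ωn) (hΨn : Ψ '' Ωn = Ωp)
    (hcover : ∀ x ∈ Sb, ∃ T ∈ 𝒯, Ψ x = T x) :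
    ∀ t > 0, ∀ x ∈ Sb, up t x = 1 / 2 := by
  -- membership transfer lemma
  have mem_iff : ∀ (Φ : M → M), Function.Injective Φ → ∀ (S S' : Set M), Φ '' S = S' →
      ∀ x, (Φ x ∈ S' ↔ x ∈ S) := by
    intro Φ hinj S S' h x
    constructor
    · intro hx
      rw [← h] at hx
      obtain ⟨y, hy, hyx⟩ := hx
      rwa [← hinj hyx]
    · intro hx
      rw [← h]
      exact ⟨x, hx, rfl⟩
  -- Step 1: up + un = 1 for t > 0
  have hsum : ∀ t > 0, ∀ x, up t x + un t x = 1 := by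
    have hsol := hAdd _ _ _ _ hup hun
    obtain ⟨C1, hC1⟩ := hbp
    obtain ⟨C2, hC2⟩ := hbn
    have hb : ∃ C, ∀ t x, |up t x + un t x| ≤ C :=
      ⟨C1 + C2, fun t x => (abs_add_le _ _).trans (add_le_add (hC1 t x) (hC2 t x))⟩
    have hae : ∀ᵐ x ∂μ,
        (Set.indicator Ωp (fun _ => (1:ℝ)) x + Set.indicator Ωn (fun _ => (1:ℝ)) x)
          = (1:ℝ) := by
      rw [ae_iff]
      refine measure_mono_null (fun x hx => ?_) hSnull
      simp only [Set.mem_setOf_eq] at hx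
      rcases hpart x with ⟨h1, h2, h3⟩ | ⟨h1, h2, h3⟩ | ⟨h1, h2, h3⟩
      · exact absurd (by simp [Set.indicator_of_mem h1, Set.indicator_of_notMem h2]) hx
      · exact absurd (by simp [Set.indicator_of_mem h1, Set.indicator_of_notMem h2]) hx
      · exact h1
    intro t ht x
    exact hUniq _ _ _ _ hsol hConst hb ⟨1, fun _ _ => by simp⟩ hae t ht x
  -- Step 2: up ∘ T = up for T ∈ 𝒯
  have hT : ∀ T ∈ 𝒯, ∀ t > 0, ∀ x, up t (T x) = up t x := by
    intro T hT t ht x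
    obtain ⟨hTiso, hTbij⟩ := h𝒯 T hT
    obtain ⟨hTp, _⟩ := h𝒯pres T hT
    have hsol := hIso _ _ T hTiso hTbij hup
    obtain ⟨C1, hC1⟩ := hbp
    have hae : ∀ᵐ y ∂μ, Set.indicator Ωp (fun _ => (1:ℝ)) (T y)
        = Set.indicator Ωp (fun _ => (1:ℝ)) y := by
      filter_upwards with y
      by_cases hy : y ∈ Ωp
      · rw [Set.indicator_of_mem hy, Set.indicator_of_mem ((mem_iff T hTbij.1 _ _ hTp y).mpr hy)]
      · rw [Set.indicator_of_notMem hy,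
          Set.indicator_of_notMem (fun h => hy ((mem_iff T hTbij.1 _ _ hTp y).mp h))]
    exact hUniq _ _ _ _ hsol hup ⟨C1, fun t x => hC1 t (T x)⟩ ⟨C1, hC1⟩ hae t ht x
  -- Step 3: up ∘ Ψ = un
  have hPsi : ∀ t > 0, ∀ x, up t (Ψ x) = un t x := by
    intro t ht x
    have hsol := hIso _ _ Ψ hΨiso hΨbij hup
    obtain ⟨C1, hC1⟩ := hbp
    have hae : ∀ᵐ y ∂μ, Set.indicator Ωp (fun _ => (1:ℝ)) (Ψ y)
        = Set.indicator Ωn (fun _ => (1:ℝ)) y := by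
      filter_upwards with y
      by_cases hy : y ∈ Ωn
      · rw [Set.indicator_of_mem hy, Set.indicator_of_mem ((mem_iff Ψ hΨbij.1 _ _ hΨn y).mpr hy)]
      · rw [Set.indicator_of_notMem hy,
          Set.indicator_of_notMem (fun h => hy ((mem_iff Ψ hΨbij.1 _ _ hΨn y).mp h))]
    exact hUniq _ _ _ _ hsol hun ⟨C1, fun t x => hC1 t (Ψ x)⟩ hbn hae t ht x
  -- conclusion
  intro t ht x hx
  obtain ⟨T, hTmem, hTx⟩ := hcover x hx
  have h1 : up t x = un t x := by
    rw [← hT T hTmem t ht x, ← hTx, hPsi t ht x]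
  have h2 := hsum t ht x
  linarith
end

section
/- Let η be a smooth function of a real variable (thought of as the mean curvature along the normal direction of a surface in a 3-dimensional space form of curvature σ), satisfying the Riccati-type recursion coming from ∇_N S = S² + σI for a 2×2 traceless symmetric family S(t): η^{(2k)} is a linear combination of traces tr(S^{2j+1}) (j = 0,…,k) and η^{(2k+1)} is a linear combination of traces tr(S^{2j}) (j = 0,…,k+1). Consequently, if S(0) is traceless then all even-order derivatives η^{(2k)}(0) vanish. -/
/-!
Because `S' = S² + σ` commutes with `S`, the entries of `S ^ (k + 1)` have derivative
`(k + 1) S ^ k (S² + σ)`, so `(tr S^k)' = k (tr S^(k+1) + σ tr S^(k-1))`: differentiation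
moves every exponent by one, and the derivatives of `η = tr S` alternate between the span of
the odd and the span of the even power traces. A traceless `2 × 2` matrix squares to a scalar
by Cayley–Hamilton, so all its odd powers are traceless.
-/

open Finset

section MatrixDeriv

variable {𝕜 : Type*} [NontriviallyNormedField 𝕜] {l m n : Type*} [Fintype m] {t : 𝕜}

theorem Matrix.hasDerivAt_mul_apply {A : 𝕜 → Matrix l m 𝕜} {B : 𝕜 → Matrix m n 𝕜}
    {A' : Matrix l m 𝕜} {B' : Matrix m n 𝕜}
    (hA : ∀ i j, HasDerivAt (fun s => A s i j) (A' i j) t)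
    (hB : ∀ i j, HasDerivAt (fun s => B s i j) (B' i j) t) (i : l) (j : n) :
    HasDerivAt (fun s => (A s * B s) i j) ((A' * B t + A t * B') i j) t := by
  simp only [Matrix.mul_apply, Matrix.add_apply, ← sum_add_distrib]
  exact HasDerivAt.fun_sum fun k _ => (hA i k).mul (hB k j)

theorem Matrix.hasDerivAt_pow_succ_apply [DecidableEq m] {A : 𝕜 → Matrix m m 𝕜}
    {A' : Matrix m m 𝕜} (hA : ∀ i j, HasDerivAt (fun s => A s i j) (A' i j) t)
    (hcomm : Commute (A t) A') (k : ℕ) (i j : m) :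
    HasDerivAt (fun s => (A s ^ (k + 1)) i j) (((k + 1 : 𝕜) • (A t ^ k * A')) i j) t := by
  induction k generalizing i j with
  | zero => simpa using hA i j
  | succ k ih =>
    simp_rw [pow_succ _ (k + 1)]
    convert Matrix.hasDerivAt_mul_apply ih hA i j using 2
    have hswap : A t ^ k * A' * A t = A t ^ (k + 1) * A' := by
      rw [mul_assoc, ← hcomm.eq, ← mul_assoc, ← pow_succ]
    rw [smul_mul_assoc, hswap, Nat.cast_succ, add_smul _ 1, one_smul, Matrix.add_apply]

theorem Matrix.hasDerivAt_trace [Fintype l] {A : 𝕜 → Matrix l l 𝕜} {A' : Matrix l l 𝕜}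
    (hA : ∀ i j, HasDerivAt (fun s => A s i j) (A' i j) t) :
    HasDerivAt (fun s => (A s).trace) A'.trace t :=
  HasDerivAt.fun_sum fun i _ => hA i i

end MatrixDeriv

section Riccati

variable {n : Type*} [Fintype n] [DecidableEq n] {σ : ℝ} {S : ℝ → Matrix n n ℝ}

variable (σ S) in
def IsRiccatiSolution : Prop :=
  ∀ t i j, HasDerivAt (fun s => S s i j) ((S t ^ 2 + σ • (1 : Matrix n n ℝ)) i j) t

theorem IsRiccatiSolution.hasDerivAt_trace_pow
    (hS : IsRiccatiSolution σ S) (k : ℕ) (t : ℝ) :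
    HasDerivAt (fun s => (S s ^ k).trace)
      (k * ((S t ^ (k + 1)).trace + σ * (S t ^ (k - 1)).trace)) t := by
  -- at `k = 0` the factor `k` makes the truncated `k - 1` harmless
  cases k with
  | zero => simpa using hasDerivAt_const t (1 : Matrix n n ℝ).trace
  | succ k =>
    have hcomm : Commute (S t) (S t ^ 2 + σ • 1) :=
      ((Commute.self_pow _ 2).add_right ((Commute.one_right _).smul_right σ))
    refine (Matrix.hasDerivAt_trace
      (Matrix.hasDerivAt_pow_succ_apply (hS t) hcomm k)).congr_deriv ?_
    rw [mul_add, mul_smul_comm, mul_one, ← pow_add, Matrix.trace_smul, Matrix.trace_add,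
      Matrix.trace_smul]
    push_cast
    simp only [smul_eq_mul]

variable (S) in
def traceSpan (s : Set ℕ) : Submodule ℝ (ℝ → ℝ) :=
  Submodule.span ℝ ((fun k t => (S t ^ k).trace) '' s)

theorem IsRiccatiSolution.exists_hasDerivAt_mem_traceSpan
    (hS : IsRiccatiSolution σ S) {s s' : Set ℕ}
    (hss' : ∀ k ∈ s, k ≠ 0 → k + 1 ∈ s' ∧ k - 1 ∈ s') {f : ℝ → ℝ}
    (hf : f ∈ traceSpan S s) : ∃ g ∈ traceSpan S s', ∀ t, HasDerivAt f (g t) t := by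
  induction hf using Submodule.span_induction with
  | mem f hf =>
    obtain ⟨k, hk, rfl⟩ := hf
    refine ⟨(k : ℝ) • ((fun t => (S t ^ (k + 1)).trace) + σ • fun t => (S t ^ (k - 1)).trace),
      ?_, hS.hasDerivAt_trace_pow k⟩
    rcases eq_or_ne k 0 with rfl | hk0
    · simp
    · obtain ⟨hsucc, hpred⟩ := hss' k hk hk0
      exact Submodule.smul_mem _ _ (add_mem (Submodule.subset_span ⟨_, hsucc, rfl⟩)
        (Submodule.smul_mem _ _ (Submodule.subset_span ⟨_, hpred, rfl⟩)))
  | zero => exact ⟨0, zero_mem _, fun t => hasDerivAt_const t 0⟩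
  | add f₁ f₂ _ _ ih₁ ih₂ =>
    obtain ⟨g₁, hg₁, h₁⟩ := ih₁
    obtain ⟨g₂, hg₂, h₂⟩ := ih₂
    exact ⟨g₁ + g₂, add_mem hg₁ hg₂, fun t => (h₁ t).add (h₂ t)⟩
  | smul c f _ ih =>
    obtain ⟨g, hg, h⟩ := ih
    exact ⟨c • g, Submodule.smul_mem _ c hg, fun t => (h t).const_smul c⟩

theorem IsRiccatiSolution.deriv_mem_traceSpan
    (hS : IsRiccatiSolution σ S) {s s' : Set ℕ}
    (hss' : ∀ k ∈ s, k ≠ 0 → k + 1 ∈ s' ∧ k - 1 ∈ s') {f : ℝ → ℝ}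
    (hf : f ∈ traceSpan S s) : deriv f ∈ traceSpan S s' := by
  obtain ⟨g, hg, hfg⟩ := hS.exists_hasDerivAt_mem_traceSpan hss' hf
  rwa [show deriv f = g from funext fun t => (hfg t).deriv]

theorem mem_traceSpan_image_range_iff {e : ℕ → ℕ} {N : ℕ} {f : ℝ → ℝ} :
    f ∈ traceSpan S (e '' ↑(range N)) ↔
      ∃ a : ℕ → ℝ, ∀ t, f t = ∑ j ∈ range N, a j * (S t ^ e j).trace := by
  rw [traceSpan, Set.image_image, Submodule.mem_span_image_finset_iff_exists_fun']
  simp only [funext_iff, Finset.sum_apply, Pi.smul_apply, smul_eq_mul, eq_comm]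

def oddExponents (k : ℕ) : Set ℕ := (fun j => 2 * j + 1) '' ↑(range (k + 1))

def evenExponents (k : ℕ) : Set ℕ := (fun j => 2 * j) '' ↑(range (k + 2))

theorem IsRiccatiSolution.iteratedDeriv_trace_mem_traceSpan
    (hS : IsRiccatiSolution σ S) (k : ℕ) :
    iteratedDeriv (2 * k) (fun s => (S s).trace) ∈ traceSpan S (oddExponents k) ∧
      iteratedDeriv (2 * k + 1) (fun s => (S s).trace) ∈ traceSpan S (evenExponents k) := by
  have odd_to_even : ∀ k, ∀ e ∈ oddExponents k, e ≠ 0 →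
      e + 1 ∈ evenExponents k ∧ e - 1 ∈ evenExponents k := by
    rintro k _ ⟨j, hj, rfl⟩ -
    simp only [coe_range, Set.mem_Iio] at hj
    refine ⟨⟨j + 1, ?_, ?_⟩, ⟨j, ?_, ?_⟩⟩ <;> simp only [coe_range, Set.mem_Iio] <;> omega
  have even_to_odd : ∀ k, ∀ e ∈ evenExponents k, e ≠ 0 →
      e + 1 ∈ oddExponents (k + 1) ∧ e - 1 ∈ oddExponents (k + 1) := by
    rintro k _ ⟨j, hj, rfl⟩ hj0
    simp only [coe_range, Set.mem_Iio, ne_eq, mul_eq_zero] at hj hj0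
    refine ⟨⟨j, ?_, ?_⟩, ⟨j - 1, ?_, ?_⟩⟩ <;> simp only [coe_range, Set.mem_Iio] <;> omega
  induction k with
  | zero =>
    have h : (fun s => (S s).trace) ∈ traceSpan S (oddExponents 0) :=
      Submodule.subset_span ⟨1, ⟨0, by simp, rfl⟩, by simp⟩
    exact ⟨h, by simpa using hS.deriv_mem_traceSpan (odd_to_even 0) h⟩
  | succ k ih =>
    have h : iteratedDeriv (2 * (k + 1)) (fun s => (S s).trace) ∈
        traceSpan S (oddExponents (k + 1)) := by
      rw [show 2 * (k + 1) = 2 * k + 1 + 1 by ring, iteratedDeriv_succ]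
      exact hS.deriv_mem_traceSpan (even_to_odd k) ih.2
    exact ⟨h, by rw [iteratedDeriv_succ]; exact hS.deriv_mem_traceSpan (odd_to_even _) h⟩

end Riccati

theorem Matrix.sq_eq_neg_det_smul_one_of_trace_eq_zero {R : Type*} [CommRing R] [Nontrivial R]
    {A : Matrix (Fin 2) (Fin 2) R} (h : A.trace = 0) :
    A ^ 2 = -A.det • (1 : Matrix (Fin 2) (Fin 2) R) := by
  have := A.aeval_self_charpoly
  rw [A.charpoly_fin_two, h] at this
  simpa [Algebra.algebraMap_eq_smul_one, add_eq_zero_iff_eq_neg] using this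

theorem Matrix.trace_pow_two_mul_add_one_eq_zero {R : Type*} [CommRing R] [Nontrivial R]
    {A : Matrix (Fin 2) (Fin 2) R} (h : A.trace = 0) (j : ℕ) : (A ^ (2 * j + 1)).trace = 0 := by
  rw [pow_succ, pow_mul, Matrix.sq_eq_neg_det_smul_one_of_trace_eq_zero h, smul_pow, one_pow,
    smul_mul_assoc, one_mul, Matrix.trace_smul, h, smul_zero]

theorem even_derivatives_of_mean_curvature_vanish_general
    (σ : ℝ) (S : ℝ → Matrix (Fin 2) (Fin 2) ℝ)
    (hODE : ∀ t i j, HasDerivAt (fun s => S s i j)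
      ((S t ^ 2 + σ • (1 : Matrix (Fin 2) (Fin 2) ℝ)) i j) t) :
    (∀ k : ℕ, ∃ a : ℕ → ℝ, ∀ t : ℝ,
        iteratedDeriv (2 * k) (fun s => (S s).trace) t
          = ∑ j ∈ range (k + 1), a j * (S t ^ (2 * j + 1)).trace)
      ∧ (∀ k : ℕ, ∃ b : ℕ → ℝ, ∀ t : ℝ,
        iteratedDeriv (2 * k + 1) (fun s => (S s).trace) t
          = ∑ j ∈ range (k + 2), b j * (S t ^ (2 * j)).trace)
      ∧ ((S 0).trace = 0 → ∀ k : ℕ,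
        iteratedDeriv (2 * k) (fun s => (S s).trace) 0 = 0) := by
  have hspan := IsRiccatiSolution.iteratedDeriv_trace_mem_traceSpan hODE
  have heven (k : ℕ) := mem_traceSpan_image_range_iff.mp (hspan k).1
  refine ⟨heven, fun k => mem_traceSpan_image_range_iff.mp (hspan k).2, fun h0 k => ?_⟩
  obtain ⟨a, ha⟩ := heven k
  rw [ha 0]
  exact sum_eq_zero fun j _ => by rw [Matrix.trace_pow_two_mul_add_one_eq_zero h0 j, mul_zero]

/-- Let `S(t)` be a smooth family of symmetric 2×2 real matrices satisfying the
Riccati equation `S' = S² + σ·I` (coming from `∇_N S = S² + σI` in a space form of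
curvature `σ`), and let `η(t) = tr S(t)`.  Then every even-order derivative
`η^{(2k)}` is a linear combination of the traces `tr(S^{2j+1})`, `j = 0,…,k`, every
odd-order derivative `η^{(2k+1)}` is a linear combination of the traces `tr(S^{2j})`,
`j = 0,…,k+1`; consequently, if `S(0)` is traceless, then all even-order derivatives
`η^{(2k)}(0)` vanish. -/
theorem even_derivatives_of_mean_curvature_vanish
    (σ : ℝ) (S : ℝ → Matrix (Fin 2) (Fin 2) ℝ)
    (hsmooth : ∀ i j, ContDiff ℝ (⊤ : ℕ∞) fun t => S t i j)
    (hsymm : ∀ t, (S t).IsSymm)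
    (hODE : ∀ t i j, HasDerivAt (fun s => S s i j)
      ((S t ^ 2 + σ • (1 : Matrix (Fin 2) (Fin 2) ℝ)) i j) t) :
    (∀ k : ℕ, ∃ a : ℕ → ℝ, ∀ t : ℝ,
        iteratedDeriv (2 * k) (fun s => (S s).trace) t
          = ∑ j ∈ range (k + 1), a j * (S t ^ (2 * j + 1)).trace)
      ∧ (∀ k : ℕ, ∃ b : ℕ → ℝ, ∀ t : ℝ,
        iteratedDeriv (2 * k + 1) (fun s => (S s).trace) t
          = ∑ j ∈ range (k + 2), b j * (S t ^ (2 * j)).trace)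
      ∧ ((S 0).trace = 0 → ∀ k : ℕ,
        iteratedDeriv (2 * k) (fun s => (S s).trace) 0 = 0) :=
  even_derivatives_of_mean_curvature_vanish_general σ S hODE
end
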